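/- The polar transform L ↦ L° is continuous as a map from the family of nonempty compact convex subsets of ℝ^d containing the origin, equipped with the Hausdorff metric, to the family of closed subsets of ℝ^d equipped with the Fell topology: if compact convex sets L_n containing 0 converge to a compact convex set L containing 0 in the Hausdorff metric, then L_n° converges to L° in the Painlevé–Kuratowski sense. -/

import Mathlib

open Set Filter Topology Pointwise

noncomputable section

abbrev Euc (d : ℕ) := EuclideanSpace ℝ (Fin d)

/-- The polar set `L° = { x : ⟨x,y⟩ ≤ 1 ∀ y ∈ L }`. -/
def polarSet {d : ℕ} (L : Set (Euc d)) : Set (Euc d) :=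
  {x | ∀ y ∈ L, (inner ℝ x y : ℝ) ≤ 1}

/-- The lower limit of a sequence of sets. -/
def setLimInf {d : ℕ} (F : ℕ → Set (Euc d)) : Set (Euc d) :=
  {x | ∃ f : ℕ → Euc d, (∀ n, f n ∈ F n) ∧ Tendsto f atTop (nhds x)}

/-- The upper limit of a sequence of sets. -/
def setLimSup {d : ℕ} (F : ℕ → Set (Euc d)) : Set (Euc d) :=
  {x | ∃ φ : ℕ → ℕ, StrictMono φ ∧
    ∃ f : ℕ → Euc d, (∀ k, f k ∈ F (φ k)) ∧ Tendsto f atTop (nhds x)}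

/-- Painlevé–Kuratowski convergence of a sequence of sets. -/
def PKConv {d : ℕ} (F : ℕ → Set (Euc d)) (F₀ : Set (Euc d)) : Prop :=
  setLimSup F = F₀ ∧ setLimInf F = F₀

/-- If compact convex sets `L_n ∋ 0` converge in the Hausdorff metric to a compact
convex `L ∋ 0`, then `L_n° → L°` in the Painlevé–Kuratowski sense (Fell topology). -/
theorem pkconv_polar_of_hausdorff {d : ℕ} (L : ℕ → Set (Euc d)) (L₀ : Set (Euc d))
    (hLcomp : ∀ n, IsCompact (L n)) (hLconv : ∀ n, Convex ℝ (L n))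
    (hL0 : ∀ n, (0 : Euc d) ∈ L n)
    (hL₀comp : IsCompact L₀) (hL₀conv : Convex ℝ L₀) (hL₀0 : (0 : Euc d) ∈ L₀)
    (hconv : Tendsto (fun n => Metric.hausdorffDist (L n) L₀) atTop (nhds 0)) :
    PKConv (fun n => polarSet (L n)) (polarSet L₀) := by
  have hne : ∀ n, (L n).Nonempty := fun n => ⟨0, hL0 n⟩
  have hne₀ : L₀.Nonempty := ⟨0, hL₀0⟩
  have hedist : ∀ n, EMetric.hausdorffEdist (L n) L₀ ≠ ⊤ := fun n =>
    Metric.hausdorffEdist_ne_top_of_nonempty_of_bounded (hne n) hne₀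
      (hLcomp n).isBounded hL₀comp.isBounded
  set ε : ℕ → ℝ := fun n => Metric.hausdorffDist (L n) L₀ with hεdef
  have hε0 : ∀ n, 0 ≤ ε n := fun n => Metric.hausdorffDist_nonneg
  -- Part A: limsup ⊆ polar L₀
  have hA : setLimSup (fun n => polarSet (L n)) ⊆ polarSet L₀ := by
    rintro x ⟨φ, hφ, f, hf, hfx⟩ y hy
    have hsel : ∀ n, ∃ z ∈ L n, Metric.infDist y (L n) = dist y z :=
      fun n => (hLcomp n).exists_infDist_eq_dist (hne n) y
    choose g hg hgd using hsel
    have hgy : Tendsto g atTop (𝓝 y) := by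
      rw [tendsto_iff_dist_tendsto_zero]
      refine squeeze_zero (fun n => dist_nonneg) (fun n => ?_) hconv
      rw [dist_comm, ← hgd n]
      calc Metric.infDist y (L n) ≤ Metric.hausdorffDist L₀ (L n) :=
            Metric.infDist_le_hausdorffDist_of_mem hy
              (by rw [EMetric.hausdorffEdist_comm]; exact hedist n)
        _ = ε n := Metric.hausdorffDist_comm
    have hinner : Tendsto (fun k => (inner ℝ (f k) (g (φ k)) : ℝ)) atTop
        (𝓝 (inner ℝ x y : ℝ)) :=
      Filter.Tendsto.inner hfx (hgy.comp hφ.tendsto_atTop)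
    exact le_of_tendsto hinner (Eventually.of_forall fun k => hf k _ (hg (φ k)))
  -- Part B: polar L₀ ⊆ liminf
  have hB : polarSet L₀ ⊆ setLimInf (fun n => polarSet (L n)) := by
    intro x hx
    have hden : ∀ n, (0:ℝ) < 1 + ‖x‖ * ε n := fun n => by
      have := hε0 n; positivity
    set c : ℕ → ℝ := fun n => (1 + ‖x‖ * ε n)⁻¹ with hcdef
    refine ⟨fun n => c n • x, fun n y hy => ?_, ?_⟩
    · obtain ⟨z, hz, hdz⟩ := hL₀comp.exists_infDist_eq_dist hne₀ y
      have hdle : dist y z ≤ ε n := by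
        rw [← hdz]
        exact Metric.infDist_le_hausdorffDist_of_mem hy (hedist n)
      have h1 : (inner ℝ x y : ℝ) ≤ 1 + ‖x‖ * ε n := by
        have heq : (inner ℝ x y : ℝ) = inner ℝ x z + inner ℝ x (y - z) := by
          rw [← inner_add_right]; congr 1; abel
        have h2 : (inner ℝ x (y - z) : ℝ) ≤ ‖x‖ * ε n := by
          calc (inner ℝ x (y - z) : ℝ) ≤ ‖x‖ * ‖y - z‖ := real_inner_le_norm x (y - z)
            _ ≤ ‖x‖ * ε n := by
                apply mul_le_mul_of_nonneg_left _ (norm_nonneg x)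
                rw [← dist_eq_norm]; exact hdle
        have h3 : (inner ℝ x z : ℝ) ≤ 1 := hx z hz
        linarith [heq ▸ add_le_add h3 h2]
      have : (inner ℝ (c n • x) y : ℝ) = c n * inner ℝ x y := real_inner_smul_left x y (c n)
      rw [this]
      calc c n * (inner ℝ x y : ℝ) ≤ c n * (1 + ‖x‖ * ε n) :=
            mul_le_mul_of_nonneg_left h1 (inv_nonneg.mpr (hden n).le)
        _ = 1 := inv_mul_cancel₀ (hden n).ne'
    · have hc1 : Tendsto c atTop (𝓝 1) := by
        have : Tendsto (fun n => 1 + ‖x‖ * ε n) atTop (𝓝 (1 + ‖x‖ * 0)) :=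
          (tendsto_const_nhds.mul hconv).const_add 1
        simpa using (this.inv₀ (by simp)).congr (fun n => rfl)
      have := hc1.smul (tendsto_const_nhds : Tendsto (fun _ : ℕ => x) atTop (𝓝 x))
      simpa using this
  -- Part C: liminf ⊆ limsup
  have hC : setLimInf (fun n => polarSet (L n)) ⊆ setLimSup (fun n => polarSet (L n)) := by
    rintro x ⟨f, hf, hfx⟩
    exact ⟨id, strictMono_id, f, hf, hfx⟩
  exact ⟨subset_antisymm hA (hB.trans hC), subset_antisymm (hC.trans hA) hB⟩
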